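/- Let 0 < i ≤ n and let G be a simple connected graph on n vertices realizing S_{i,n}. Then the graph (G ∪ 2K1) ∨ K1 on n+3 vertices realizes S_{{i+1,n+2}_{n+3}^1}. In particular, if S_{i,n} is Laplacian realizable, then so is S_{{i+1,n+2}_{n+3}^1}. -/

import Mathlib

open SimpleGraph

/-- The join of two graphs: disjoint union plus all edges between the two parts. -/
def graphJoin {α β : Type} (G : SimpleGraph α) (H : SimpleGraph β) :
    SimpleGraph (α ⊕ β) where
  Adj u v := match u, v with
    | Sum.inl u, Sum.inl v => G.Adj u v
    | Sum.inr u, Sum.inr v => H.Adj u v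
    | Sum.inl _, Sum.inr _ => True
    | Sum.inr _, Sum.inl _ => True
  symm := ⟨fun u v => by cases u <;> cases v <;> simp [G.adj_symm, H.adj_symm] <;> exact fun h => h.symm⟩
  loopless := ⟨fun u => by cases u <;> simp⟩

/-- The Laplacian spectrum of a finite graph, as the multiset of roots (with multiplicity)
of the characteristic polynomial of its Laplacian matrix over `ℝ`. -/
noncomputable def lapSpec {V : Type} [Fintype V] [DecidableEq V] (G : SimpleGraph V) :
    Multiset ℝ :=
  letI := Classical.decRel G.Adj
  (G.lapMatrix ℝ).charpoly.roots

/-- `G` realizes the multiset `s` if `G` is connected and its Laplacian spectrum is `s`. -/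
def Realizes {V : Type} [Fintype V] [DecidableEq V] (G : SimpleGraph V) (s : Multiset ℝ) :
    Prop :=
  G.Connected ∧ lapSpec G = s

/-- The multiset `S_{{i,j}_n^m}`: `{0,1,…,n}` with the element `m` doubled and `i`, `j` removed. -/
noncomputable def SijSet (n i j m : ℕ) : Multiset ℝ :=
  (m : ℝ) ::ₘ (((Multiset.range (n + 1)).map (fun k => (k : ℝ))) - {(i : ℝ), (j : ℝ)})

/-- The multiset `S_{i,n} = {0,1,…,n} \ {i}`. -/
noncomputable def SinSet (i n : ℕ) : Multiset ℝ :=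
  ((Multiset.range (n + 1)).map (fun k => (k : ℝ))) - {(i : ℝ)}

/-- The set `S_{{i,j}_n^m}` is Laplacian realizable. -/
def LapRealizable (n i j m : ℕ) : Prop :=
  ∃ G : SimpleGraph (Fin n), Realizes G (SijSet n i j m)

/-! Let `H` have `N` vertices. The rows of `L(H) + 1` sum to `1`, so multiplying the
characteristic matrix of `L(H ∨ K₁)` on the right by a block upper triangular matrix of
determinant `X - 1` kills its last column up to the corner entry `X (X - (N + 1))`. Hence
`(X - 1) χ(H ∨ K₁) = X (X - (N + 1)) χ(H)(X - 1)`. For `H = G ∪ 2K₁` we have `χ(H) = X² χ(G)`,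
so the spectrum of `(G ∪ 2K₁) ∨ K₁` is `{0, n + 3, 1}` together with the spectrum of `G` shifted
by one, and shifting `S_{i,n}` by one and adding `0, 1, n + 3` gives `S_{{i+1,n+2}_{n+3}^1}`. -/

open Polynomial

section ConeDeterminant
open Matrix
variable {R : Type*} [CommRing R] {V : Type*} [Fintype V] [DecidableEq V]

theorem charpoly_add_one (M : Matrix V V R) : (M + 1).charpoly = M.charpoly.comp (X - C 1) := by
  simpa [sub_eq_add_neg] using charpoly_sub_scalar M (-1)

theorem sum_charmatrix_row_of_sum_row {A : Matrix V V R} {c : R} (hA : ∀ v, ∑ u, A v u = c)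
    (v : V) : ∑ u, A.charmatrix v u = X - C c := by
  simp [charmatrix_apply, Finset.sum_sub_distrib, ← map_sum, hA, diagonal_apply]

theorem charpoly_fromBlocks_cone (A : Matrix V V R) (hA : ∀ v, ∑ u, A v u = 1) :
    (X - C 1) * (fromBlocks A (of fun _ _ => -1) (of fun _ _ => -1)
      (of fun _ _ => (Fintype.card V : R)) : Matrix (V ⊕ Fin 1) (V ⊕ Fin 1) R).charpoly =
      X * (X - C ((Fintype.card V : R) + 1)) * A.charpoly := by
  -- right multiplication by `E` replaces the last column `c` by `(X - 1) c - (sum of the others)`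
  let E : Matrix (V ⊕ Fin 1) (V ⊕ Fin 1) R[X] :=
    fromBlocks 1 (of fun _ _ => -1) 0 (of fun _ _ => X - C 1)
  have hE : E.det = X - C 1 := by simp [E, det_fromBlocks_zero₂₁]
  have hrow := sum_charmatrix_row_of_sum_row hA
  have hprod : charmatrix (fromBlocks A (of fun _ _ => -1) (of fun _ _ => -1)
      (of fun _ _ => (Fintype.card V : R)) : Matrix (V ⊕ Fin 1) (V ⊕ Fin 1) R) * E =
      fromBlocks A.charmatrix 0 (of fun _ _ => 1)
        (of fun _ _ => X * (X - C ((Fintype.card V : R) + 1))) := by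
    rw [charmatrix_fromBlocks, fromBlocks_multiply]
    congr 1
    · simp
    · ext v j
      simp [mul_apply, hrow]
    · ext i j
      simp
    · ext i j : 1
      obtain ⟨rfl, rfl⟩ : i = 0 ∧ j = 0 := ⟨Subsingleton.elim _ _, Subsingleton.elim _ _⟩
      simp [mul_apply, charmatrix_apply_eq]
      ring
  rw [charpoly, ← hE, mul_comm, ← det_mul, hprod, det_fromBlocks_zero₁₂, det_fin_one, charpoly]
  simp only [of_apply]
  ring

end ConeDeterminant

section Laplacian
open Matrix Finset

variable {R : Type*} [Ring R]

theorem SimpleGraph.degree_eq_sum_ite {V : Type*} [Fintype V] (G : SimpleGraph V)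
    [DecidableRel G.Adj] (v : V) : G.degree v = ∑ u, if G.Adj v u then 1 else 0 := by
  rw [degree, neighborFinset_eq_filter, card_filter]

section Sum
variable {α β : Type*} [Fintype α] [Fintype β] (G : SimpleGraph α) (H : SimpleGraph β)
  [DecidableRel (G ⊕g H).Adj]

theorem SimpleGraph.degree_sum_inl [DecidableRel G.Adj] (a : α) :
    (G ⊕g H).degree (.inl a) = G.degree a := by
  rw [degree_eq_sum_ite, degree_eq_sum_ite, Fintype.sum_sum_type]
  simp

theorem SimpleGraph.degree_sum_inr [DecidableRel H.Adj] (b : β) :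
    (G ⊕g H).degree (.inr b) = H.degree b := by
  rw [degree_eq_sum_ite, degree_eq_sum_ite, Fintype.sum_sum_type]
  simp

theorem SimpleGraph.lapMatrix_sum [DecidableEq α] [DecidableEq β] [DecidableRel G.Adj]
    [DecidableRel H.Adj] :
    (G ⊕g H).lapMatrix R = fromBlocks (G.lapMatrix R) 0 0 (H.lapMatrix R) := by
  ext (a | b) (a' | b') <;>
    simp [lapMatrix, degMatrix, adjMatrix, diagonal, degree_sum_inl, degree_sum_inr]

end Sum

theorem SimpleGraph.lapMatrix_bot {β : Type*} [Fintype β] [DecidableEq β] :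
    (⊥ : SimpleGraph β).lapMatrix R = 0 := by
  ext a b
  simp [lapMatrix, degMatrix]

theorem SimpleGraph.Iso.reindex_lapMatrix {α β : Type*} [Fintype α] [Fintype β] [DecidableEq α]
    [DecidableEq β] {G : SimpleGraph α} {H : SimpleGraph β} [DecidableRel G.Adj]
    [DecidableRel H.Adj] (e : G ≃g H) : (G.lapMatrix R).reindex e e = H.lapMatrix R := by
  ext a b
  obtain ⟨a, rfl⟩ := e.surjective a
  obtain ⟨b, rfl⟩ := e.surjective b
  rw [lapMatrix, lapMatrix, ← e.reindex_adjMatrix R]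
  simp [degMatrix, diagonal_apply]

section Join
variable {α β : Type} (G : SimpleGraph α) (H : SimpleGraph β)

@[simp] theorem graphJoin_adj_inl_inl (a a' : α) :
    (graphJoin G H).Adj (.inl a) (.inl a') ↔ G.Adj a a' := Iff.rfl

@[simp] theorem graphJoin_adj_inr_inr (b b' : β) :
    (graphJoin G H).Adj (.inr b) (.inr b') ↔ H.Adj b b' := Iff.rfl

@[simp] theorem graphJoin_adj_inl_inr (a : α) (b : β) : (graphJoin G H).Adj (.inl a) (.inr b) :=
  trivial

@[simp] theorem graphJoin_adj_inr_inl (b : β) (a : α) : (graphJoin G H).Adj (.inr b) (.inl a) :=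
  trivial

theorem graphJoin_connected [Nonempty α] [Nonempty β] : (graphJoin G H).Connected := by
  obtain ⟨a⟩ := ‹Nonempty α›
  rw [connected_iff_exists_forall_reachable]
  refine ⟨.inl a, fun v => ?_⟩
  rcases v with a' | b
  · obtain ⟨b⟩ := ‹Nonempty β›
    exact (graphJoin_adj_inl_inr G H a b).reachable.trans
      (graphJoin_adj_inr_inl G H b a').reachable
  · exact (graphJoin_adj_inl_inr G H a b).reachable

variable [Fintype α] [Fintype β] [DecidableRel (graphJoin G H).Adj]

theorem degree_graphJoin_inl [DecidableRel G.Adj] (a : α) :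
    (graphJoin G H).degree (.inl a) = G.degree a + Fintype.card β := by
  rw [degree_eq_sum_ite, degree_eq_sum_ite, Fintype.sum_sum_type]
  simp

theorem degree_graphJoin_inr [DecidableRel H.Adj] (b : β) :
    (graphJoin G H).degree (.inr b) = H.degree b + Fintype.card α := by
  rw [degree_eq_sum_ite, degree_eq_sum_ite, Fintype.sum_sum_type]
  simp [add_comm]

end Join

theorem lapMatrix_graphJoin {α β : Type} [Fintype α] [Fintype β] [DecidableEq α] [DecidableEq β]
    (G : SimpleGraph α) (H : SimpleGraph β) [DecidableRel G.Adj] [DecidableRel H.Adj]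
    [DecidableRel (graphJoin G H).Adj] :
    (graphJoin G H).lapMatrix R =
      fromBlocks (G.lapMatrix R + (Fintype.card β : R) • 1) (of fun _ _ => -1) (of fun _ _ => -1)
        (H.lapMatrix R + (Fintype.card α : R) • 1) := by
  ext (a | b) (a' | b') <;>
    simp [lapMatrix, degMatrix, adjMatrix, diagonal_apply, one_apply, degree_graphJoin_inl,
      degree_graphJoin_inr] <;>
    split_ifs <;> simp_all

end Laplacian

section Spectrum
open Matrix

theorem Polynomial.roots_comp_X_sub_C {R : Type*} [CommRing R] [IsDomain R] (p : R[X]) (a : R) :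
    (p.comp (X - C a)).roots = p.roots.map (· + a) := by
  simpa [sub_eq_add_neg] using roots_comp_C_mul_X_add_C p 1 (-a) isUnit_one

theorem lapSpec_eq_roots {V : Type} [Fintype V] [DecidableEq V] (G : SimpleGraph V)
    [DecidableRel G.Adj] : lapSpec G = (G.lapMatrix ℝ).charpoly.roots := by
  unfold lapSpec
  congr

theorem lapSpec_eq_of_iso {V W : Type} [Fintype V] [DecidableEq V] [Fintype W] [DecidableEq W]
    {G : SimpleGraph V} {H : SimpleGraph W} (e : G ≃g H) : lapSpec G = lapSpec H := by
  classical
  rw [lapSpec_eq_roots, lapSpec_eq_roots, ← e.reindex_lapMatrix, charpoly_reindex]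

theorem Realizes.of_iso {V W : Type} [Fintype V] [DecidableEq V] [Fintype W] [DecidableEq W]
    {G : SimpleGraph V} {H : SimpleGraph W} {s : Multiset ℝ} (e : G ≃g H) (h : Realizes H s) :
    Realizes G s :=
  ⟨e.connected_iff.mpr h.1, (lapSpec_eq_of_iso e).trans h.2⟩

theorem charpoly_lapMatrix_graphJoin_bot_fin_one {V : Type} [Fintype V] [DecidableEq V]
    (G : SimpleGraph V) [DecidableRel G.Adj]
    [DecidableRel (graphJoin G (⊥ : SimpleGraph (Fin 1))).Adj] :
    (X - C 1) * ((graphJoin G (⊥ : SimpleGraph (Fin 1))).lapMatrix ℝ).charpoly =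
      X * (X - C ((Fintype.card V : ℝ) + 1)) * (G.lapMatrix ℝ).charpoly.comp (X - C 1) := by
  have hrow (v : V) : ∑ u, (G.lapMatrix ℝ + 1) v u = 1 := by
    have := congrFun (G.lapMatrix_mulVec_const_eq_zero (R := ℝ)) v
    simp_all [mulVec, dotProduct, Finset.sum_add_distrib, one_apply]
  have hcorner : (⊥ : SimpleGraph (Fin 1)).lapMatrix ℝ + (Fintype.card V : ℝ) • 1 =
      of fun _ _ => (Fintype.card V : ℝ) := by
    ext i j
    simp [lapMatrix_bot, Subsingleton.elim i j]
  rw [lapMatrix_graphJoin, hcorner, Fintype.card_fin, Nat.cast_one, one_smul,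
    charpoly_fromBlocks_cone _ hrow, charpoly_add_one]

theorem charpoly_lapMatrix_cone_sum_two_bot {V : Type} [Fintype V] [DecidableEq V]
    (G : SimpleGraph V) [DecidableRel G.Adj]
    [DecidableRel (graphJoin (G ⊕g (⊥ : SimpleGraph (Fin 2))) (⊥ : SimpleGraph (Fin 1))).Adj] :
    ((graphJoin (G ⊕g (⊥ : SimpleGraph (Fin 2))) (⊥ : SimpleGraph (Fin 1))).lapMatrix ℝ).charpoly =
      X * (X - C ((Fintype.card V : ℝ) + 3)) * (X - C 1) *
        (G.lapMatrix ℝ).charpoly.comp (X - C 1) := by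
  classical
  have hsum : ((G ⊕g (⊥ : SimpleGraph (Fin 2))).lapMatrix ℝ).charpoly =
      (G.lapMatrix ℝ).charpoly * X ^ 2 := by
    rw [lapMatrix_sum, lapMatrix_bot, charpoly_fromBlocks_zero₁₂, charpoly_zero, Fintype.card_fin]
  have h := charpoly_lapMatrix_graphJoin_bot_fin_one (G ⊕g (⊥ : SimpleGraph (Fin 2)))
  have hcard : ((Fintype.card V + 2 : ℕ) : ℝ) + 1 = Fintype.card V + 3 := by push_cast; ring
  rw [hsum, mul_comp, pow_comp, X_comp, Fintype.card_sum, Fintype.card_fin, hcard] at h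
  refine mul_left_cancel₀ (X_sub_C_ne_zero 1) (h.trans ?_)
  ring

theorem lapSpec_cone_sum_two_bot {V : Type} [Fintype V] [DecidableEq V] (G : SimpleGraph V) :
    lapSpec (graphJoin (G ⊕g (⊥ : SimpleGraph (Fin 2))) (⊥ : SimpleGraph (Fin 1))) =
      0 ::ₘ ((Fintype.card V : ℝ) + 3) ::ₘ 1 ::ₘ (lapSpec G).map (· + 1) := by
  classical
  have hne := (charpoly_monic
    ((graphJoin (G ⊕g (⊥ : SimpleGraph (Fin 2))) (⊥ : SimpleGraph (Fin 1))).lapMatrix ℝ)).ne_zero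
  rw [charpoly_lapMatrix_cone_sum_two_bot] at hne
  rw [lapSpec_eq_roots, lapSpec_eq_roots, charpoly_lapMatrix_cone_sum_two_bot, roots_mul hne,
    roots_mul (left_ne_zero_of_mul hne), roots_mul (left_ne_zero_of_mul (left_ne_zero_of_mul hne)),
    roots_X, roots_X_sub_C, roots_X_sub_C, roots_comp_X_sub_C]
  simp [Multiset.singleton_add]

end Spectrum

section Multisets
open Multiset

theorem Multiset.range_add_one_eq_cons_map_succ (n : ℕ) :
    range (n + 1) = 0 ::ₘ (range n).map Nat.succ := by
  simp [Multiset.range, List.range_succ_eq_map]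

theorem SinSet_eq_map_erase (i n : ℕ) :
    SinSet i n = ((range (n + 1)).erase i).map (Nat.cast : ℕ → ℝ) := by
  simp only [SinSet, pure_def, bind_def, bind_singleton, map_id', sub_singleton,
    map_erase _ Nat.cast_injective]

theorem SijSet_eq_cons_map_erase (n i j m : ℕ) :
    SijSet n i j m = (m : ℝ) ::ₘ (((range (n + 1)).erase i).erase j).map (Nat.cast : ℕ → ℝ) := by
  simp only [SijSet, pure_def, bind_def, bind_singleton, map_id', insert_eq_cons, sub_cons,
    sub_singleton, map_erase _ Nat.cast_injective]

theorem cons_cons_erase_range_map_succ {i n : ℕ} (hin : i ≤ n) :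
    0 ::ₘ (n + 3) ::ₘ ((range (n + 1)).erase i).map Nat.succ =
      ((range (n + 4)).erase (i + 1)).erase (n + 2) := by
  rw [range_succ (n + 3), range_succ (n + 2), erase_cons_tail _ (show n + 3 ≠ i + 1 by omega),
    erase_cons_tail _ (show n + 2 ≠ i + 1 by omega),
    erase_cons_tail _ (show n + 3 ≠ n + 2 by omega), erase_cons_head, range_add_one_eq_cons_map_succ (n + 1),
    erase_cons_tail _ (show 0 ≠ i + 1 by omega), ← map_erase _ Nat.succ_injective, cons_swap]

theorem cons_map_add_one_SinSet {i n : ℕ} (hin : i ≤ n) :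
    0 ::ₘ ((n : ℝ) + 3) ::ₘ 1 ::ₘ (SinSet i n).map (· + 1) = SijSet (n + 3) (i + 1) (n + 2) 1 := by
  have h := congrArg (map (Nat.cast : ℕ → ℝ)) (cons_cons_erase_range_map_succ hin)
  simp only [map_cons, Multiset.map_map, Function.comp_def, Nat.cast_succ, Nat.cast_zero,
    show (n : ℝ) + 1 + 1 + 1 = n + 3 by ring] at h
  rw [SinSet_eq_map_erase, SijSet_eq_cons_map_erase, Multiset.map_map, Function.comp_def,
    Nat.cast_one, ← h, cons_swap 1 0, cons_swap 1]

end Multisets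

theorem stmt2_general {n i : ℕ} (hin : i ≤ n) (G : SimpleGraph (Fin n))
    (hG : Realizes G (SinSet i n)) :
    Realizes (graphJoin (G ⊕g (⊥ : SimpleGraph (Fin 2))) (⊥ : SimpleGraph (Fin 1)))
      (SijSet (n + 3) (i + 1) (n + 2) 1) ∧
    LapRealizable (n + 3) (i + 1) (n + 2) 1 := by
  have hcone : Realizes (graphJoin (G ⊕g (⊥ : SimpleGraph (Fin 2))) (⊥ : SimpleGraph (Fin 1)))
      (SijSet (n + 3) (i + 1) (n + 2) 1) := by
    refine ⟨graphJoin_connected _ _, ?_⟩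
    rw [lapSpec_cone_sum_two_bot, hG.2, Fintype.card_fin, cons_map_add_one_SinSet hin]
  let e : Fin (n + 3) ≃ (Fin n ⊕ Fin 2) ⊕ Fin 1 := (Fintype.equivFinOfCardEq (by simp)).symm
  exact ⟨hcone, _, hcone.of_iso (Iso.comap e _)⟩

/-- If `G` on `n` vertices realizes `S_{i,n}`, then `(G ∪ 2K1) ∨ K1` realizes
`S_{{i+1,n+2}_{n+3}^1}`; in particular the latter set is Laplacian realizable. -/
theorem stmt2 {n i : ℕ} (hi : 0 < i) (hin : i ≤ n) (G : SimpleGraph (Fin n))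
    (hG : Realizes G (SinSet i n)) :
    Realizes (graphJoin (G ⊕g (⊥ : SimpleGraph (Fin 2))) (⊥ : SimpleGraph (Fin 1)))
      (SijSet (n + 3) (i + 1) (n + 2) 1) ∧
    LapRealizable (n + 3) (i + 1) (n + 2) 1 :=
  stmt2_general hin G hG
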